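/- arXiv:1904.08402 — 2 statements merged into one kernel-verified Lean document; each statement's English description precedes it below -/
import Mathlib

section
/- For all integers ℓ ≥ 1, m ≥ 1 and x ≥ 1, every factor of Y(m,ℓ) of the form u·v·(−^x) with Δ(u) ≥ x has length greater than (x/(2ℓ))^ℓ. Equivalently, ψ(Y(m,ℓ), x) ≥ (x/(2ℓ))^ℓ. -/
/-- X(a₀) = +^{a₀} −^{a₀};
X(a₀,…,a_{k+1}) = +^{a_{k+1}} X(a₀,…,a_k) X(a₀,…,a_k) −^{a_{k+1}}. -/
def Xword (a : ℕ → ℕ) : ℕ → List ℤ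
  | 0 => List.replicate (a 0) 1 ++ List.replicate (a 0) (-1)
  | k + 1 => List.replicate (a (k + 1)) 1 ++ Xword a k ++ Xword a k
      ++ List.replicate (a (k + 1)) (-1)

/-- Y(m,ℓ) = X(a₀,…,a_{mℓ−1}) with aᵢ = 2^{⌊i/ℓ⌋}. -/
def Yword (m ℓ : ℕ) : List ℤ := Xword (fun i => 2 ^ (i / ℓ)) (m * ℓ - 1)

namespace YQ
variable (a : ℕ → ℕ)

/-- A_k = a_0 + ... + a_k -/
def Asum (k : ℕ) : ℕ := ∑ i ∈ Finset.range (k+1), a i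

/-- length of Xword a k -/
def XLen : ℕ → ℕ
  | 0 => 2 * a 0
  | k+1 => 2 * a (k+1) + 2 * XLen k

lemma length_Xword : ∀ t, (Xword a t).length = XLen a t
  | 0 => by simp [Xword, XLen]; ring
  | t+1 => by simp [Xword, XLen, length_Xword t]; ring

lemma sum_Xword : ∀ t, (Xword a t).sum = 0
  | 0 => by simp [Xword]
  | t+1 => by simp [Xword, sum_Xword t]

/-- height after p letters of Xword a t -/
def Hgt (t p : ℕ) : ℤ := ((Xword a t).take p).sum

lemma Hgt_zero (t : ℕ) : Hgt a t 0 = 0 := by simp [Hgt]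

lemma Hgt_top (t p : ℕ) (hp : XLen a t ≤ p) : Hgt a t p = 0 := by
  rw [Hgt, List.take_of_length_le (by rw [length_Xword]; exact hp), sum_Xword]

lemma take_sum (A B : List ℤ) (p : ℕ) :
    ((A ++ B).take p).sum = (A.take p).sum + (B.take (p - A.length)).sum := by
  rw [List.take_append, List.sum_append]

lemma take_rep_one (n p : ℕ) : ((List.replicate n (1:ℤ)).take p).sum = min p n := by
  simp [List.take_replicate]

lemma take_rep_neg (n p : ℕ) : ((List.replicate n (-1:ℤ)).take p).sum = -(min p n : ℤ) := by
  simp [List.take_replicate]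

lemma Hgt_succ (t p : ℕ) :
    Hgt a (t+1) p = ((min p (a (t+1)) : ℕ) : ℤ) + Hgt a t (p - a (t+1))
      + Hgt a t (p - (a (t+1) + XLen a t))
      - ((min (p - (a (t+1) + 2 * XLen a t)) (a (t+1)) : ℕ) : ℤ) := by
  show ((List.replicate (a (t+1)) 1 ++ Xword a t ++ Xword a t
      ++ List.replicate (a (t+1)) (-1)).take p).sum = _
  rw [take_sum, take_sum, take_sum, take_rep_one, take_rep_neg]
  simp only [List.length_append, List.length_replicate, length_Xword, Hgt]
  push_cast
  ring

lemma XLen_succ (t : ℕ) : XLen a (t+1) = 2 * a (t+1) + 2 * XLen a t := rfl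

lemma Asum_succ (t : ℕ) : Asum a (t+1) = Asum a t + a (t+1) := by
  simp [Asum, Finset.sum_range_succ]

lemma Asum_zero : Asum a 0 = a 0 := by simp [Asum]

lemma Hgt_base (p : ℕ) :
    Hgt a 0 p = (min p (a 0) : ℤ) - ((min (p - a 0) (a 0) : ℕ) : ℤ) := by
  show ((List.replicate (a 0) 1 ++ List.replicate (a 0) (-1)).take p).sum = _
  rw [take_sum, take_rep_one, take_rep_neg, List.length_replicate]
  push_cast; ring

lemma Hgt_P (t p : ℕ) (hp : p ≤ a (t+1)) : Hgt a (t+1) p = p := by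
  rw [Hgt_succ, show p - a (t+1) = 0 by omega,
    show p - (a (t+1) + XLen a t) = 0 by omega,
    show min (p - (a (t+1) + 2 * XLen a t)) (a (t+1)) = 0 by omega,
    show min p (a (t+1)) = p by omega, Hgt_zero]
  simp

lemma Hgt_C1 (t p : ℕ) (hp1 : a (t+1) ≤ p) (hp2 : p ≤ a (t+1) + XLen a t) :
    Hgt a (t+1) p = a (t+1) + Hgt a t (p - a (t+1)) := by
  rw [Hgt_succ, show p - (a (t+1) + XLen a t) = 0 by omega,
    show min (p - (a (t+1) + 2 * XLen a t)) (a (t+1)) = 0 by omega,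
    show min p (a (t+1)) = a (t+1) by omega, Hgt_zero]
  simp

lemma Hgt_C2 (t p : ℕ) (hp1 : a (t+1) + XLen a t ≤ p)
    (hp2 : p ≤ a (t+1) + 2 * XLen a t) :
    Hgt a (t+1) p = a (t+1) + Hgt a t (p - (a (t+1) + XLen a t)) := by
  rw [Hgt_succ, Hgt_top a t (p - a (t+1)) (by omega),
    show min (p - (a (t+1) + 2 * XLen a t)) (a (t+1)) = 0 by omega,
    show min p (a (t+1)) = a (t+1) by omega]
  simp

lemma Hgt_M (t p : ℕ) (hp1 : a (t+1) + 2 * XLen a t ≤ p) (hp2 : p ≤ XLen a (t+1)) :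
    Hgt a (t+1) p = (XLen a (t+1) : ℤ) - p := by
  rw [Hgt_succ, Hgt_top a t (p - a (t+1)) (by omega),
    Hgt_top a t (p - (a (t+1) + XLen a t)) (by omega),
    show min (p - (a (t+1) + 2 * XLen a t)) (a (t+1)) = p - (a (t+1) + 2 * XLen a t) by
      rw [XLen_succ] at hp2; omega,
    show min p (a (t+1)) = a (t+1) by omega, XLen_succ]
  rw [XLen_succ] at hp2
  omega

lemma Hgt_nonneg : ∀ t p, 0 ≤ Hgt a t p := by
  intro t
  induction t with
  | zero => intro p; rw [Hgt_base]; omega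
  | succ t IH =>
    intro p
    rcases le_or_gt p (a (t+1)) with h | h
    · rw [Hgt_P a t p h]; positivity
    · rcases le_or_gt p (a (t+1) + XLen a t) with h2 | h2
      · rw [Hgt_C1 a t p (le_of_lt h) h2]; have := IH (p - a (t+1)); omega
      · rcases le_or_gt p (a (t+1) + 2 * XLen a t) with h3 | h3
        · rw [Hgt_C2 a t p (le_of_lt h2) h3]
          have := IH (p - (a (t+1) + XLen a t)); omega
        · rcases le_or_gt p (XLen a (t+1)) with h4 | h4
          · rw [Hgt_M a t p (le_of_lt h3) h4]; omega
          · rw [Hgt_top a (t+1) p (le_of_lt h4)]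

lemma Hgt_le : ∀ t p, Hgt a t p ≤ Asum a t := by
  intro t
  induction t with
  | zero => intro p; rw [Hgt_base, Asum_zero]; omega
  | succ t IH =>
    intro p
    have hA : (0:ℤ) ≤ Asum a t := by positivity
    rw [Asum_succ]
    rcases le_or_gt p (a (t+1)) with h | h
    · rw [Hgt_P a t p h]; push_cast; omega
    · rcases le_or_gt p (a (t+1) + XLen a t) with h2 | h2
      · rw [Hgt_C1 a t p (le_of_lt h) h2]; have := IH (p - a (t+1)); push_cast; omega
      · rcases le_or_gt p (a (t+1) + 2 * XLen a t) with h3 | h3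
        · rw [Hgt_C2 a t p (le_of_lt h2) h3]
          have := IH (p - (a (t+1) + XLen a t)); push_cast; omega
        · rcases le_or_gt p (XLen a (t+1)) with h4 | h4
          · rw [Hgt_M a t p (le_of_lt h3) h4]
            have hN : XLen a (t+1) = 2 * a (t+1) + 2 * XLen a t := rfl
            push_cast; omega
          · rw [Hgt_top a (t+1) p (le_of_lt h4)]; push_cast; omega

lemma Hgt_mid_ge (t p : ℕ) (h1 : a (t+1) ≤ p) (h2 : p ≤ a (t+1) + 2 * XLen a t) :
    (a (t+1) : ℤ) ≤ Hgt a (t+1) p := by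
  rcases le_or_gt p (a (t+1) + XLen a t) with h | h
  · rw [Hgt_C1 a t p h1 h]; have := Hgt_nonneg a t (p - a (t+1)); omega
  · rw [Hgt_C2 a t p (le_of_lt h) h2]
    have := Hgt_nonneg a t (p - (a (t+1) + XLen a t)); omega

lemma mem_Xword : ∀ t, ∀ c ∈ Xword a t, c = 1 ∨ c = -1 := by
  intro t
  induction t with
  | zero =>
    intro c hc
    rw [Xword, List.mem_append] at hc
    rcases hc with hc | hc
    · exact Or.inl (List.eq_of_mem_replicate hc)
    · exact Or.inr (List.eq_of_mem_replicate hc)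
  | succ t IH =>
    intro c hc
    rw [Xword, List.mem_append, List.mem_append, List.mem_append] at hc
    rcases hc with ((hc | hc) | hc) | hc
    · exact Or.inl (List.eq_of_mem_replicate hc)
    · exact IH c hc
    · exact IH c hc
    · exact Or.inr (List.eq_of_mem_replicate hc)

lemma sum_bounds (l : List ℤ) (h : ∀ c ∈ l, c = 1 ∨ c = -1) :
    -(l.length : ℤ) ≤ l.sum ∧ l.sum ≤ l.length := by
  induction l with
  | nil => simp
  | cons c l IH =>
    have hc := h c (by simp)
    have := IH (fun d hd => h d (by simp [hd]))
    simp only [List.sum_cons, List.length_cons]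
    push_cast
    omega

lemma Hgt_diff (t q p : ℕ) (h : q ≤ p) :
    Hgt a t p - Hgt a t q ≤ (p : ℤ) - q ∧ (q : ℤ) - p ≤ Hgt a t p - Hgt a t q := by
  have hp : p = q + (p - q) := by omega
  have : Hgt a t p = Hgt a t q + (((Xword a t).drop q).take (p - q)).sum := by
    conv_lhs => rw [Hgt, hp, List.take_add]
    rw [List.sum_append]; rfl
  set l := ((Xword a t).drop q).take (p - q) with hl
  have hmem : ∀ c ∈ l, c = 1 ∨ c = -1 := fun c hc =>
    mem_Xword a t c (List.mem_of_mem_drop (List.mem_of_mem_take hc))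
  have hlen : l.length ≤ p - q := by
    rw [hl]; exact le_trans (List.length_take_le _ _) (le_refl _)
  have := sum_bounds l hmem
  omega

lemma Asum_mono {j k : ℕ} (h : j ≤ k) : Asum a j ≤ Asum a k := by
  unfold Asum
  exact Finset.sum_le_sum_of_subset (Finset.range_subset_range.2 (by omega))

lemma Asum_ge (ha : ∀ i, 1 ≤ a i) (k : ℕ) : k + 1 ≤ Asum a k := by
  calc k + 1 = ∑ i ∈ Finset.range (k+1), 1 := by simp
  _ ≤ Asum a k := Finset.sum_le_sum (fun i _ => ha i)

lemma XLen_mono {j k : ℕ} (h : j ≤ k) : XLen a j ≤ XLen a k := by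
  induction k with
  | zero => rw [Nat.le_zero.mp h]
  | succ k IH =>
    rcases Nat.eq_or_lt_of_le h with rfl | h2
    · exact le_refl _
    · exact le_trans (IH (by omega)) (by rw [XLen_succ]; omega)

lemma XLen_ge_two_Asum : ∀ k, 2 * Asum a k ≤ XLen a k := by
  intro k
  induction k with
  | zero => rw [Asum_zero]; exact le_refl _
  | succ k IH => rw [Asum_succ, XLen_succ]; omega

lemma XLen_ge_pow (ha : ∀ i, 1 ≤ a i) : ∀ k, 2 ^ (k+1) ≤ XLen a k := by
  intro k
  induction k with
  | zero => have := ha 0; show 2^1 ≤ 2 * a 0; omega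
  | succ k IH => rw [XLen_succ]; have := ha (k+1); rw [pow_succ]; omega

/-- the lower bound function -/
noncomputable def Bnd (x : ℕ) : ℕ :=
  if sInf {i | x ≤ Asum a i} = 0 then 2 * x
  else XLen a (sInf {i | x ≤ Asum a i} - 1)
    + 2 * (x - Asum a (sInf {i | x ≤ Asum a i} - 1))

lemma Bnd_le_XLen (x k : ℕ) (hk : x ≤ Asum a k) : Bnd a x ≤ XLen a k := by
  have h2 : sInf {i | x ≤ Asum a i} ≤ k :=
    Nat.sInf_le (show k ∈ {i | x ≤ Asum a i} from hk)
  have h1 : x ≤ Asum a (sInf {i | x ≤ Asum a i}) :=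
    Nat.sInf_mem (⟨k, hk⟩ : Set.Nonempty {i | x ≤ Asum a i})
  have main : Bnd a x ≤ XLen a (sInf {i | x ≤ Asum a i}) := by
    unfold Bnd
    cases hw : sInf {i | x ≤ Asum a i} with
    | zero =>
      rw [hw, Asum_zero] at h1
      simp only [if_pos rfl]
      calc 2 * x ≤ 2 * a 0 := by omega
      _ = XLen a 0 := rfl
    | succ s =>
      rw [hw] at h1
      have hA := Asum_succ a s
      simp only [Nat.succ_ne_zero, if_false, Nat.succ_sub_one]
      rw [XLen_succ]
      omega
  exact le_trans main (XLen_mono a h2)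

lemma Bnd_eq_base (x : ℕ) (h : x ≤ Asum a 0) : Bnd a x = 2 * x := by
  have h0 : sInf {i | x ≤ Asum a i} = 0 :=
    Nat.eq_zero_of_le_zero (Nat.sInf_le (show 0 ∈ {i | x ≤ Asum a i} from h))
  unfold Bnd
  rw [h0]
  simp

lemma Bnd_eq_succ (x t : ℕ) (h1 : Asum a t < x) (h2 : x ≤ Asum a (t+1)) :
    Bnd a x = XLen a t + 2 * (x - Asum a t) := by
  have hw : sInf {i | x ≤ Asum a i} = t + 1 := by
    apply le_antisymm (Nat.sInf_le (show t+1 ∈ {i | x ≤ Asum a i} from h2))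
    by_contra hlt
    push_neg at hlt
    have hmem : x ≤ Asum a (sInf {i | x ≤ Asum a i}) :=
      Nat.sInf_mem (⟨t+1, h2⟩ : Set.Nonempty {i | x ≤ Asum a i})
    have : x ≤ Asum a t := le_trans hmem (Asum_mono a (by omega))
    omega
  unfold Bnd
  rw [hw]
  simp

lemma core (x : ℕ) (hx : 1 ≤ x) :
    ∀ t γ α β, γ ≤ α → α ≤ β → β ≤ XLen a t →
    Hgt a t γ + x ≤ Hgt a t α → Hgt a t β + x ≤ Hgt a t α →
    γ + Bnd a x ≤ β := by
  intro t
  induction t with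
  | zero =>
    intro γ α β h1 h2 h3 hc hd
    have d1 := Hgt_diff a 0 γ α h1
    have d2 := Hgt_diff a 0 α β h2
    have hub := Hgt_le a 0 α
    have hlb := Hgt_nonneg a 0 γ
    rw [Asum_zero] at hub
    have hxa : x ≤ Asum a 0 := by rw [Asum_zero]; omega
    rw [Bnd_eq_base a x hxa]
    omega
  | succ t IH =>
    intro γ α β h1 h2 h3 hc hd
    set A := a (t+1) with hA
    set L := XLen a t with hL
    have hN : XLen a (t+1) = 2 * A + 2 * L := rfl
    have hL2A : 2 * Asum a t ≤ L := XLen_ge_two_Asum a t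
    have hAs : Asum a (t+1) = Asum a t + A := Asum_succ a t
    rcases le_or_gt α A with hα1 | hα1
    · -- Case I : α in the opening plus run
      have hHα : Hgt a (t+1) α = α := Hgt_P a t α hα1
      have hHγ : Hgt a (t+1) γ = γ := Hgt_P a t γ (by omega)
      rw [hHα, hHγ] at hc
      rw [hHα] at hd
      have hβM : A + 2 * L ≤ β := by
        by_contra hcon
        push_neg at hcon
        rcases le_or_gt β A with hb | hb
        · rw [Hgt_P a t β hb] at hd; omega
        · have := Hgt_mid_ge a t β (by omega) (by omega)
          omega
      rw [Hgt_M a t β hβM h3, hN] at hd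
      have hxA : x ≤ A := by omega
      rcases le_or_gt x (Asum a t) with hxa | hxa
      · have hB := Bnd_le_XLen a x t hxa
        push_cast at hc hd
        omega
      · have hB := Bnd_eq_succ a x t hxa (by omega)
        push_cast at hc hd
        omega
    · rcases le_or_gt α (A + L) with hα2 | hα2
      · -- Case II : α in the first copy
        have hHα : Hgt a (t+1) α = A + Hgt a t (α - A) := Hgt_C1 a t α (by omega) hα2
        rcases le_or_gt β (A + L) with hβ1 | hβ1
        · -- β also in the first copy
          have hHβ : Hgt a (t+1) β = A + Hgt a t (β - A) := Hgt_C1 a t β (by omega) hβ1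
          rw [hHα, hHβ] at hd
          have hd' : Hgt a t (β - A) + x ≤ Hgt a t (α - A) := by omega
          rcases le_or_gt A γ with hγ1 | hγ1
          · have hHγ : Hgt a (t+1) γ = A + Hgt a t (γ - A) := Hgt_C1 a t γ hγ1 (by omega)
            rw [hHα, hHγ] at hc
            have hc' : Hgt a t (γ - A) + x ≤ Hgt a t (α - A) := by omega
            have := IH (γ - A) (α - A) (β - A) (by omega) (by omega) (by omega) hc' hd'
            omega
          · have h0 := Hgt_nonneg a t (β - A)
            have hc' : Hgt a t 0 + x ≤ Hgt a t (α - A) := by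
              rw [Hgt_zero]; omega
            have := IH 0 (α - A) (β - A) (by omega) (by omega) (by omega) hc' hd'
            omega
        · rcases le_or_gt β (A + 2 * L) with hβ2 | hβ2
          · -- β in the second copy
            have hβge : (A : ℤ) ≤ Hgt a (t+1) β := Hgt_mid_ge a t β (by omega) hβ2
            rw [hHα] at hd
            have hdx : Hgt a t L + x ≤ Hgt a t (α - A) := by
              rw [Hgt_top a t L (le_refl L)]
              omega
            rcases le_or_gt A γ with hγ1 | hγ1
            · have hHγ : Hgt a (t+1) γ = A + Hgt a t (γ - A) := Hgt_C1 a t γ hγ1 (by omega)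
              rw [hHα, hHγ] at hc
              have hc' : Hgt a t (γ - A) + x ≤ Hgt a t (α - A) := by omega
              have := IH (γ - A) (α - A) L (by omega) (by omega) (le_refl L) hc' hdx
              omega
            · have hc' : Hgt a t 0 + x ≤ Hgt a t (α - A) := by
                rw [Hgt_zero]
                have := Hgt_nonneg a t L
                omega
              have := IH 0 (α - A) L (by omega) (by omega) (le_refl L) hc' hdx
              omega
          · -- β in the closing minus run
            have hHβ : Hgt a (t+1) β = (XLen a (t+1) : ℤ) - β := Hgt_M a t β (by omega) h3
            have hup : Hgt a t (α - A) ≤ Asum a t := Hgt_le a t (α - A)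
            rcases le_or_gt A γ with hγ1 | hγ1
            · have hHγ : Hgt a (t+1) γ = A + Hgt a t (γ - A) := Hgt_C1 a t γ hγ1 (by omega)
              have h0 := Hgt_nonneg a t (γ - A)
              rw [hHα, hHγ] at hc
              have hxa : x ≤ Asum a t := by omega
              have hB := Bnd_le_XLen a x t hxa
              omega
            · have hHγ : Hgt a (t+1) γ = γ := Hgt_P a t γ (by omega)
              rw [hHα, hHγ] at hc
              rw [hHα, hHβ, hN] at hd
              have hlb := Hgt_nonneg a t (α - A)
              rcases le_or_gt x (Asum a t) with hxa | hxa
              · have hB := Bnd_le_XLen a x t hxa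
                push_cast at hc hd
                omega
              · have hB := Bnd_eq_succ a x t hxa (by omega)
                push_cast at hc hd
                omega
      · rcases le_or_gt α (A + 2 * L) with hα3 | hα3
        · -- Case III : α in the second copy
          have hHα : Hgt a (t+1) α = A + Hgt a t (α - (A + L)) :=
            Hgt_C2 a t α (by omega) hα3
          rcases le_or_gt (A + L) γ with hγ1 | hγ1
          · -- γ also in the second copy
            have hHγ : Hgt a (t+1) γ = A + Hgt a t (γ - (A + L)) :=
              Hgt_C2 a t γ hγ1 (by omega)
            rw [hHα, hHγ] at hc
            have hc' : Hgt a t (γ - (A + L)) + x ≤ Hgt a t (α - (A + L)) := by omega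
            rcases le_or_gt β (A + 2 * L) with hβ1 | hβ1
            · have hHβ : Hgt a (t+1) β = A + Hgt a t (β - (A + L)) :=
                Hgt_C2 a t β (by omega) hβ1
              rw [hHα, hHβ] at hd
              have hd' : Hgt a t (β - (A + L)) + x ≤ Hgt a t (α - (A + L)) := by omega
              have := IH (γ - (A + L)) (α - (A + L)) (β - (A + L))
                (by omega) (by omega) (by omega) hc' hd'
              omega
            · have h0 := Hgt_nonneg a t (γ - (A + L))
              have hd' : Hgt a t L + x ≤ Hgt a t (α - (A + L)) := by
                rw [Hgt_top a t L (le_refl L)]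
                omega
              have := IH (γ - (A + L)) (α - (A + L)) L (by omega) (by omega)
                (le_refl L) hc' hd'
              omega
          · -- γ before the second copy
            rcases le_or_gt (x : ℤ) (Hgt a t (α - (A + L))) with hax | hax
            · have hc' : Hgt a t 0 + x ≤ Hgt a t (α - (A + L)) := by
                rw [Hgt_zero]; omega
              rcases le_or_gt β (A + 2 * L) with hβ1 | hβ1
              · have hHβ : Hgt a (t+1) β = A + Hgt a t (β - (A + L)) :=
                  Hgt_C2 a t β (by omega) hβ1
                rw [hHα, hHβ] at hd
                have hd' : Hgt a t (β - (A + L)) + x ≤ Hgt a t (α - (A + L)) := by omega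
                have := IH 0 (α - (A + L)) (β - (A + L)) (by omega) (by omega)
                  (by omega) hc' hd'
                omega
              · have hd' : Hgt a t L + x ≤ Hgt a t (α - (A + L)) := by
                  rw [Hgt_top a t L (le_refl L)]; omega
                have := IH 0 (α - (A + L)) L (by omega) (by omega) (le_refl L) hc' hd'
                omega
            · -- the apex is low : γ and β are outside the middle part
              have hγA : γ < A := by
                by_contra hcon
                push_neg at hcon
                have := Hgt_mid_ge a t γ hcon (by omega)
                rw [hHα] at hc
                omega
              have hβM : A + 2 * L < β := by
                by_contra hcon
                push_neg at hcon
                have := Hgt_mid_ge a t β (by omega) hcon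
                rw [hHα] at hd
                omega
              have hHγ : Hgt a (t+1) γ = γ := Hgt_P a t γ (by omega)
              have hHβ : Hgt a (t+1) β = (XLen a (t+1) : ℤ) - β := Hgt_M a t β (by omega) h3
              rw [hHα, hHγ] at hc
              rw [hHα, hHβ, hN] at hd
              have hup : Hgt a t (α - (A + L)) ≤ Asum a t := Hgt_le a t (α - (A + L))
              rcases le_or_gt x (Asum a t) with hxa | hxa
              · have hB := Bnd_le_XLen a x t hxa
                push_cast at hc hd
                omega
              · have hB := Bnd_eq_succ a x t hxa (by omega)
                push_cast at hc hd
                omega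
        · -- Case IV : α in the closing minus run
          have hHα : Hgt a (t+1) α = (XLen a (t+1) : ℤ) - α :=
            Hgt_M a t α (by omega) (by omega)
          have hγA : γ < A := by
            by_contra hcon
            push_neg at hcon
            rcases le_or_gt γ (A + 2 * L) with hg | hg
            · have := Hgt_mid_ge a t γ hcon hg
              rw [hHα, hN] at hc
              push_cast at hc
              omega
            · have hHγ : Hgt a (t+1) γ = (XLen a (t+1) : ℤ) - γ :=
                Hgt_M a t γ (by omega) (by omega)
              rw [hHα, hHγ] at hc
              omega
          have hHγ : Hgt a (t+1) γ = γ := Hgt_P a t γ (by omega)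
          have hHβ : Hgt a (t+1) β = (XLen a (t+1) : ℤ) - β := Hgt_M a t β (by omega) h3
          rw [hHα, hHγ, hN] at hc
          rw [hHα, hHβ] at hd
          have hxA : x ≤ A := by push_cast at hc; omega
          rcases le_or_gt x (Asum a t) with hxa | hxa
          · have hB := Bnd_le_XLen a x t hxa
            push_cast at hc hd
            omega
          · have hB := Bnd_eq_succ a x t hxa (by omega)
            push_cast at hc hd
            omega

lemma Asum_concrete (ℓ : ℕ) (hℓ : 1 ≤ ℓ) :
    ∀ w, Asum (fun i => 2 ^ (i / ℓ)) w + ℓ ≤ 2 * ℓ * 2 ^ (w / ℓ) := by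
  intro w
  induction w using Nat.strong_induction_on with
  | _ w IH =>
    rcases lt_or_ge w ℓ with h | h
    · have hq : w / ℓ = 0 := Nat.div_eq_of_lt h
      have hs : Asum (fun i => 2 ^ (i / ℓ)) w = w + 1 := by
        unfold Asum
        calc ∑ i ∈ Finset.range (w+1), 2 ^ (i / ℓ)
            = ∑ _i ∈ Finset.range (w+1), 1 := by
              apply Finset.sum_congr rfl
              intro i hi
              rw [Finset.mem_range] at hi
              rw [Nat.div_eq_of_lt (by omega)]
              rfl
        _ = w + 1 := by simp
      rw [hs, hq]
      omega
    · have hsplit : Asum (fun i => 2 ^ (i / ℓ)) w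
          = Asum (fun i => 2 ^ (i / ℓ)) (w - ℓ)
            + ∑ i ∈ Finset.Ico (w - ℓ + 1) (w + 1), 2 ^ (i / ℓ) := by
        unfold Asum
        simp only [Finset.range_eq_Ico]
        exact (Finset.sum_Ico_consecutive _ (Nat.zero_le _)
          (show w - ℓ + 1 ≤ w + 1 by omega)).symm
      have hbound : ∑ i ∈ Finset.Ico (w - ℓ + 1) (w + 1), 2 ^ (i / ℓ)
          ≤ ℓ * 2 ^ (w / ℓ) := by
        calc ∑ i ∈ Finset.Ico (w - ℓ + 1) (w + 1), 2 ^ (i / ℓ)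
            ≤ ∑ _i ∈ Finset.Ico (w - ℓ + 1) (w + 1), 2 ^ (w / ℓ) := by
              apply Finset.sum_le_sum
              intro i hi
              rw [Finset.mem_Ico] at hi
              exact Nat.pow_le_pow_right (by norm_num)
                (Nat.div_le_div_right (by omega))
        _ = ℓ * 2 ^ (w / ℓ) := by
              rw [Finset.sum_const, Nat.card_Ico, smul_eq_mul]
              congr 1
              omega
      have hdiv : w / ℓ = (w - ℓ) / ℓ + 1 := by
        conv_lhs => rw [show w = (w - ℓ) + ℓ by omega]
        rw [Nat.add_div_right _ (by omega)]
      have IH' := IH (w - ℓ) (by omega)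
      rw [hsplit, hdiv, pow_succ]
      rw [hdiv, pow_succ] at hbound
      zify at IH' hbound ⊢
      linarith

lemma Bnd_real (ℓ x : ℕ) (hℓ : 1 ≤ ℓ) (hx : 1 ≤ x) :
    ((x : ℝ) / (2 * (ℓ : ℝ))) ^ ℓ < (Bnd (fun i => 2 ^ (i / ℓ)) x : ℝ) := by
  have ha : ∀ i, 1 ≤ (fun i => 2 ^ (i / ℓ)) i := fun i => Nat.one_le_two_pow
  have hℓR : (0:ℝ) < 2 * (ℓ:ℝ) := by positivity
  have hnonempty : Set.Nonempty {i | x ≤ Asum (fun i => 2 ^ (i / ℓ)) i} := by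
    refine ⟨x - 1, ?_⟩
    simp only [Set.mem_setOf_eq]
    have := Asum_ge (fun i => 2 ^ (i / ℓ)) ha (x - 1)
    omega
  cases hw : sInf {i | x ≤ Asum (fun i => 2 ^ (i / ℓ)) i} with
  | zero =>
    have hmem : x ≤ Asum (fun i => 2 ^ (i / ℓ)) (sInf {i | x ≤ Asum (fun i => 2 ^ (i / ℓ)) i}) :=
      Nat.sInf_mem hnonempty
    rw [hw, Asum_zero] at hmem
    simp only [Nat.zero_div, pow_zero] at hmem
    have hx1 : x = 1 := by omega
    have hB : Bnd (fun i => 2 ^ (i / ℓ)) x = 2 * x := by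
      unfold Bnd; rw [hw]; simp
    rw [hB, hx1]
    have h1 : (1 : ℝ) / (2 * (ℓ:ℝ)) ≤ 1 := by
      rw [div_le_one hℓR]
      have : (1:ℝ) ≤ (ℓ:ℝ) := by exact_mod_cast hℓ
      linarith
    have h2 : ((1 : ℕ) : ℝ) / (2 * (ℓ:ℝ)) = (1:ℝ) / (2 * (ℓ:ℝ)) := by norm_num
    rw [h2]
    calc ((1:ℝ) / (2 * (ℓ:ℝ))) ^ ℓ ≤ 1 := pow_le_one₀ (by positivity) h1
    _ < ((2 * 1 : ℕ) : ℝ) := by norm_num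
  | succ s =>
    have hmem : x ≤ Asum (fun i => 2 ^ (i / ℓ)) (sInf {i | x ≤ Asum (fun i => 2 ^ (i / ℓ)) i}) :=
      Nat.sInf_mem hnonempty
    rw [hw] at hmem
    have hmin : Asum (fun i => 2 ^ (i / ℓ)) s < x := by
      by_contra hcon
      push_neg at hcon
      have := Nat.sInf_le (show s ∈ {i | x ≤ Asum (fun i => 2 ^ (i / ℓ)) i} from hcon)
      omega
    have hBnd : Bnd (fun i => 2 ^ (i / ℓ)) x
        = XLen (fun i => 2 ^ (i / ℓ)) s + 2 * (x - Asum (fun i => 2 ^ (i / ℓ)) s) :=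
      Bnd_eq_succ _ x s hmin hmem
    have hn : x < 2 * ℓ * 2 ^ ((s+1) / ℓ) := by
      have := Asum_concrete ℓ hℓ (s+1)
      omega
    have h1 : (x : ℝ) / (2 * (ℓ:ℝ)) < 2 ^ ((s+1) / ℓ) := by
      rw [div_lt_iff₀ hℓR]
      calc (x:ℝ) < ((2 * ℓ * 2 ^ ((s+1) / ℓ) : ℕ) : ℝ) := by exact_mod_cast hn
      _ = (2:ℝ) ^ ((s+1) / ℓ) * (2 * (ℓ:ℝ)) := by push_cast; ring
    have h2 : ((x : ℝ) / (2 * (ℓ:ℝ))) ^ ℓ < (2:ℝ) ^ ((s+1) / ℓ * ℓ) := by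
      calc ((x : ℝ) / (2 * (ℓ:ℝ))) ^ ℓ < ((2:ℝ) ^ ((s+1) / ℓ)) ^ ℓ :=
        pow_lt_pow_left₀ h1 (by positivity) (by omega)
      _ = (2:ℝ) ^ ((s+1) / ℓ * ℓ) := by rw [← pow_mul]
    have h3 : 2 ^ ((s+1) / ℓ * ℓ) ≤ Bnd (fun i => 2 ^ (i / ℓ)) x := by
      have n1 : 2 ^ ((s+1) / ℓ * ℓ) ≤ 2 ^ (s+1) :=
        Nat.pow_le_pow_right (by norm_num) (Nat.div_mul_le_self _ _)
      have n2 := XLen_ge_pow (fun i => 2 ^ (i / ℓ)) ha s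
      rw [hBnd]
      omega
    have h3' : (2:ℝ) ^ ((s+1) / ℓ * ℓ) ≤ (Bnd (fun i => 2 ^ (i / ℓ)) x : ℝ) := by
      exact_mod_cast h3
    linarith

end YQ

/-- ψ(Y(m,ℓ), x) ≥ (x/(2ℓ))^ℓ: every factor of Y(m,ℓ) of the form u·v·(−^x)
with height increase Δ(u) ≥ x (note Δ(u) = u.sum) has length greater than
(x/(2ℓ))^ℓ. -/
theorem Yword_psi (m ℓ x : ℕ) (hℓ : 1 ≤ ℓ) (hm : 1 ≤ m) (hx : 1 ≤ x)
    (p u v z : List ℤ)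
    (hfac : Yword m ℓ = p ++ (u ++ v ++ List.replicate x (-1)) ++ z)
    (hΔ : (x : ℤ) ≤ u.sum) :
    ((x : ℝ) / (2 * (ℓ : ℝ))) ^ ℓ < ((u.length + v.length + x : ℕ) : ℝ) := by
  have hfac' : Xword (fun i => 2 ^ (i / ℓ)) (m * ℓ - 1)
      = p ++ (u ++ v ++ List.replicate x (-1)) ++ z := hfac
  have hE : ∀ l1 l2 : List ℤ, Xword (fun i => 2 ^ (i / ℓ)) (m * ℓ - 1) = l1 ++ l2 →
      YQ.Hgt (fun i => 2 ^ (i / ℓ)) (m * ℓ - 1) l1.length = l1.sum := by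
    intro l1 l2 h
    rw [YQ.Hgt, h, List.take_left]
  have e1 : YQ.Hgt (fun i => 2 ^ (i / ℓ)) (m * ℓ - 1) p.length = p.sum :=
    hE p (u ++ (v ++ (List.replicate x (-1) ++ z)))
      (by rw [hfac']; simp only [List.append_assoc])
  have e2 : YQ.Hgt (fun i => 2 ^ (i / ℓ)) (m * ℓ - 1) (p.length + u.length)
      = p.sum + u.sum := by
    have := hE (p ++ u) (v ++ (List.replicate x (-1) ++ z))
      (by rw [hfac']; simp only [List.append_assoc])
    simp only [List.length_append, List.sum_append] at this
    exact this
  have e3 : YQ.Hgt (fun i => 2 ^ (i / ℓ)) (m * ℓ - 1) (p.length + u.length + v.length)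
      = p.sum + u.sum + v.sum := by
    have := hE (p ++ u ++ v) (List.replicate x (-1) ++ z)
      (by rw [hfac']; simp only [List.append_assoc])
    simp only [List.length_append, List.sum_append] at this
    exact this
  have e4 : YQ.Hgt (fun i => 2 ^ (i / ℓ)) (m * ℓ - 1)
      (p.length + u.length + v.length + x)
      = p.sum + u.sum + v.sum - x := by
    have := hE (p ++ u ++ v ++ List.replicate x (-1)) z
      (by rw [hfac']; simp only [List.append_assoc])
    simp only [List.length_append, List.sum_append, List.length_replicate,
      List.sum_replicate, smul_eq_mul] at this
    rw [this]
    push_cast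
    ring
  have hlen : p.length + u.length + v.length + x + z.length
      = YQ.XLen (fun i => 2 ^ (i / ℓ)) (m * ℓ - 1) := by
    rw [← YQ.length_Xword, hfac']
    simp only [List.length_append, List.length_replicate]
    omega
  have hβ : p.length + u.length + v.length + x ≤ YQ.XLen (fun i => 2 ^ (i / ℓ)) (m * ℓ - 1) := by
    omega
  have hcore : p.length + YQ.Bnd (fun i => 2 ^ (i / ℓ)) x
      ≤ p.length + u.length + v.length + x := by
    rcases le_or_gt v.sum 0 with hv | hv
    · refine YQ.core (fun i => 2 ^ (i / ℓ)) x hx (m * ℓ - 1) p.length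
        (p.length + u.length) (p.length + u.length + v.length + x)
        (by omega) (by omega) hβ ?_ ?_
      · rw [e1, e2]; omega
      · rw [e2, e4]; omega
    · refine YQ.core (fun i => 2 ^ (i / ℓ)) x hx (m * ℓ - 1) p.length
        (p.length + u.length + v.length) (p.length + u.length + v.length + x)
        (by omega) (by omega) hβ ?_ ?_
      · rw [e1, e3]; omega
      · rw [e3, e4]; omega
  have hB : YQ.Bnd (fun i => 2 ^ (i / ℓ)) x ≤ u.length + v.length + x := by omega
  calc ((x : ℝ) / (2 * (ℓ : ℝ))) ^ ℓ < (YQ.Bnd (fun i => 2 ^ (i / ℓ)) x : ℝ) :=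
    YQ.Bnd_real ℓ x hℓ hx
  _ ≤ ((u.length + v.length + x : ℕ) : ℝ) := by exact_mod_cast hB
end

section
/- Let n be even and let K ⊆ ℝ^n be the cone of balanced vectors: K = { (x_0,…,x_{n−1}) : x_i ≥ 0 for all i, Σ_{i=0}^{n−1} (−1)^i x_i = 0, and Σ_{i=0}^{k} (−1)^i x_i ≥ 0 for all 0 ≤ k < n−1 }. Then K is exactly the set of nonnegative linear combinations of the vectors e_{i,j} with i even, j odd, i < j, where e_{i,j} is the 0/1-vector having 1 in coordinates i and j and 0 elsewhere. In particular, every x ∈ K can be written as x = Σ λ_{i,j} e_{i,j} with all λ_{i,j} ≥ 0 and the sum over pairs (i,j) with i even, j odd, i < j. -/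
/-- The 0/1-vector eᵢⱼ with 1 in coordinates i and j (i ≠ j) and 0 elsewhere. -/
def eVec (n : ℕ) (i j : Fin n) : Fin n → ℝ :=
  fun t => (if t = i then 1 else 0) + (if t = j then 1 else 0)

/-- The cone of balanced vectors K ⊆ ℝⁿ. -/
def BalancedCone (n : ℕ) (x : Fin n → ℝ) : Prop :=
  (∀ i, 0 ≤ x i) ∧
  (∑ i : Fin n, (-1 : ℝ) ^ (i : ℕ) * x i = 0) ∧
  ∀ k : ℕ, k < n - 1 →
    0 ≤ ∑ i ∈ Finset.univ.filter (fun i : Fin n => (i : ℕ) ≤ k),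
      (-1 : ℝ) ^ (i : ℕ) * x i

private lemma bc_clamp_diff (a b c d : ℝ) (hab : a ≤ b) (hcd : c ≤ d) :
    max 0 (min b d - max a c) = min b (max a d) - min b (max a c) := by
  simp only [min_def, max_def]
  split_ifs <;> linarith

private lemma bc_sum_range_two_mul (m : ℕ) (g : ℕ → ℝ) :
    ∑ i ∈ Finset.range (2 * m), g i = ∑ t ∈ Finset.range m, (g (2 * t) + g (2 * t + 1)) := by
  induction m with
  | zero => simp
  | succ m ih =>
      have h2 : 2 * (m + 1) = (2 * m + 1) + 1 := by ring
      rw [h2, Finset.sum_range_succ, Finset.sum_range_succ, Finset.sum_range_succ, ih]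
      ring

private lemma bc_row_sum (m : ℕ) (G : ℕ → ℝ) (hmono : Monotone G) (hG0 : G 0 = 0)
    (a b : ℝ) (hab : a ≤ b) (ha : 0 ≤ a) (hb : b ≤ G m) :
    ∑ t ∈ Finset.range m, max 0 (min b (G (t+1)) - max a (G t)) = b - a := by
  have key : ∀ t, max 0 (min b (G (t+1)) - max a (G t))
      = min b (max a (G (t+1))) - min b (max a (G t)) := fun t =>
    bc_clamp_diff a b (G t) (G (t+1)) hab (hmono (Nat.le_succ t))
  simp_rw [key]
  rw [Finset.sum_range_sub (fun t => min b (max a (G t))), hG0]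
  have h1 : min b (max a (G m)) = b := min_eq_left (le_trans hb (le_max_right _ _))
  have h2 : min b (max a 0) = a := by rw [max_eq_left ha, min_eq_right hab]
  rw [h1, h2]


private lemma bc_forward (n : ℕ) (hn : Even n) (x : Fin n → ℝ)
    (hx1 : ∀ i, 0 ≤ x i)
    (hx2 : ∑ i : Fin n, (-1 : ℝ) ^ (i : ℕ) * x i = 0)
    (hx3 : ∀ k : ℕ, k < n - 1 →
      0 ≤ ∑ i ∈ Finset.univ.filter (fun i : Fin n => (i : ℕ) ≤ k),
        (-1 : ℝ) ^ (i : ℕ) * x i) :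
    ∃ lam : Fin n × Fin n → ℝ,
      (∀ q, 0 ≤ lam q) ∧
      (∀ q, lam q ≠ 0 → Even (q.1 : ℕ) ∧ Odd (q.2 : ℕ) ∧ q.1 < q.2) ∧
      x = ∑ q : Fin n × Fin n, lam q • eVec n q.1 q.2 := by
  obtain ⟨m, hm⟩ : ∃ m, n = 2 * m := by
    obtain ⟨r, hr⟩ := hn; exact ⟨r, by omega⟩
  set X : ℕ → ℝ := fun i => if h : i < n then x ⟨i, h⟩ else 0 with hX
  have hxX : ∀ i : Fin n, x i = X (i : ℕ) := by
    intro i; simp [hX, i.isLt]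
  have hXnn : ∀ i, 0 ≤ X i := by
    intro i; simp only [hX]; split_ifs with h
    · exact hx1 _
    · exact le_refl _
  set F : ℕ → ℝ := fun k => ∑ t ∈ Finset.range k, X (2 * t) with hF
  set G : ℕ → ℝ := fun k => ∑ t ∈ Finset.range k, X (2 * t + 1) with hG
  have hFmono : Monotone F := by
    apply monotone_nat_of_le_succ
    intro k
    simp only [hF, Finset.sum_range_succ]
    have := hXnn (2 * k); linarith
  have hGmono : Monotone G := by
    apply monotone_nat_of_le_succ
    intro k
    simp only [hG, Finset.sum_range_succ]
    have := hXnn (2 * k + 1); linarith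
  have hF0 : F 0 = 0 := by simp [hF]
  have hG0 : G 0 = 0 := by simp [hG]
  have hFnn : ∀ k, 0 ≤ F k := fun k => hF0 ▸ hFmono (Nat.zero_le k)
  have hGnn : ∀ k, 0 ≤ G k := fun k => hG0 ▸ hGmono (Nat.zero_le k)
  -- partial alternating sums
  set T : ℕ → ℝ := fun k => ∑ i ∈ Finset.range k, (-1 : ℝ) ^ i * X i with hT
  have hTFG : ∀ k, T (2 * k) = F k - G k := by
    intro k
    induction k with
    | zero => simp [hT, hF, hG]
    | succ k ih =>
        have h2 : 2 * (k + 1) = (2 * k + 1) + 1 := by ring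
        simp only [hT, hF, hG, h2, Finset.sum_range_succ] at *
        have he : (-1 : ℝ) ^ (2 * k) = 1 := (even_two_mul k).neg_one_pow
        have ho : (-1 : ℝ) ^ (2 * k + 1) = -1 := (odd_two_mul_add_one k).neg_one_pow
        rw [he, ho] at *
        linarith
  have hTn : T n = 0 := by
    have h := Fin.sum_univ_eq_sum_range (fun i => (-1 : ℝ) ^ i * X i) n
    simp only [hT]
    rw [← h]
    simp only [← hxX]
    exact hx2
  have hfilter : ∀ K : ℕ, K + 1 ≤ n →
      ∑ i ∈ Finset.univ.filter (fun i : Fin n => (i : ℕ) ≤ K),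
        (-1 : ℝ) ^ (i : ℕ) * x i = T (K + 1) := by
    intro K hK
    rw [Finset.sum_filter]
    have : ∑ i : Fin n, (if (i : ℕ) ≤ K then (-1 : ℝ) ^ (i : ℕ) * x i else 0)
        = ∑ i ∈ Finset.range n, (if i ≤ K then (-1 : ℝ) ^ i * X i else 0) := by
      rw [← Fin.sum_univ_eq_sum_range (fun i => if i ≤ K then (-1 : ℝ) ^ i * X i else 0) n]
      exact Finset.sum_congr rfl fun i _ => by rw [hxX i]
    rw [this, hT]
    rw [← Finset.sum_subset (Finset.range_subset_range.mpr hK)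
      (fun i _ hi => if_neg (by simp at hi ⊢; omega))]
    exact Finset.sum_congr rfl fun i hi => if_pos (by simp at hi; omega)
  have hGF : ∀ k, k ≤ m → G k ≤ F k := by
    intro k hk
    rcases Nat.eq_zero_or_pos k with h0 | hpos
    · simp [h0, hF0, hG0]
    rcases eq_or_lt_of_le hk with hkm | hkm
    · have h1 := hTFG m
      rw [← hm, hTn] at h1
      rw [hkm]
      linarith
    · have hK : 2 * k - 1 < n - 1 := by omega
      have h := hx3 (2 * k - 1) hK
      rw [hfilter (2 * k - 1) (by omega)] at h
      have : 2 * k - 1 + 1 = 2 * k := by omega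
      rw [this, hTFG k] at h
      linarith
  have hFG : F m = G m := by
    have := hTFG m; rw [← hm, hTn] at this; linarith
  -- the coupling
  set L : ℕ → ℕ → ℝ := fun s t =>
    max 0 (min (F (s + 1)) (G (t + 1)) - max (F s) (G t)) with hL
  set lam : Fin n × Fin n → ℝ := fun q =>
    if Even (q.1 : ℕ) ∧ Odd (q.2 : ℕ) then L ((q.1 : ℕ) / 2) ((q.2 : ℕ) / 2) else 0 with hlam
  have hLnn : ∀ s t, 0 ≤ L s t := fun s t => le_max_left _ _
  refine ⟨lam, ?_, ?_, ?_⟩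
  · intro q
    simp only [hlam]; split_ifs
    · exact hLnn _ _
    · exact le_refl _
  · intro q hq
    simp only [hlam] at hq
    split_ifs at hq with hpar
    · obtain ⟨he, ho⟩ := hpar
      refine ⟨he, ho, ?_⟩
      by_contra hlt
      push_neg at hlt
      set s := (q.1 : ℕ) / 2 with hs
      set t := (q.2 : ℕ) / 2 with ht
      obtain ⟨r1, hr1⟩ := he
      obtain ⟨r2, hr2⟩ := ho
      have hq1 : (q.1 : ℕ) = 2 * s := by omega
      have hq2 : (q.2 : ℕ) = 2 * t + 1 := by omega
      have hle : (q.2 : ℕ) ≤ (q.1 : ℕ) := hlt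
      have hts : t + 1 ≤ s := by omega
      have hsm : s ≤ m := by
        have := q.1.isLt; omega
      have hkey : min (F (s + 1)) (G (t + 1)) ≤ max (F s) (G t) :=
        le_trans (le_trans (min_le_right _ _)
          (le_trans (hGmono hts) (hGF s hsm))) (le_max_left _ _)
      exact hq (max_eq_left (by linarith))
    · exact absurd rfl hq
  · funext c
    have hsum : (∑ q : Fin n × Fin n, lam q • eVec n q.1 q.2) c
        = (∑ j : Fin n, lam (c, j)) + (∑ i : Fin n, lam (i, c)) := by
      rw [Finset.sum_apply]
      simp only [Pi.smul_apply, smul_eq_mul, eVec, mul_add, mul_ite, mul_one, mul_zero,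
        Finset.sum_add_distrib]
      congr 1
      · rw [Fintype.sum_prod_type]
        have : ∀ i : Fin n, (∑ j : Fin n, if c = i then lam (i, j) else 0)
            = if c = i then (∑ j : Fin n, lam (i, j)) else 0 := by
          intro i; split_ifs <;> simp
        simp_rw [this]
        rw [Finset.sum_ite_eq Finset.univ c (fun i => ∑ j : Fin n, lam (i, j))]
        simp
      · rw [Fintype.sum_prod_type]
        refine Finset.sum_congr rfl fun i _ => ?_
        rw [Finset.sum_ite_eq Finset.univ c (fun j => lam (i, j))]
        simp
    rw [hsum]
    have hrow : (∑ j : Fin n, lam (c, j))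
        = if Even (c : ℕ) then ∑ t ∈ Finset.range m, L ((c : ℕ) / 2) t else 0 := by
      have h1 : ∑ j : Fin n, lam (c, j)
          = ∑ jn ∈ Finset.range n,
              (if Even (c : ℕ) ∧ Odd jn then L ((c : ℕ) / 2) (jn / 2) else 0) :=
        Fin.sum_univ_eq_sum_range
          (fun jn => if Even (c : ℕ) ∧ Odd jn then L ((c : ℕ) / 2) (jn / 2) else 0) n
      rw [h1]
      have hrn : Finset.range n = Finset.range (2 * m) := by rw [hm]
      rw [hrn, bc_sum_range_two_mul]
      have h2 : ∀ t, ((if Even (c : ℕ) ∧ Odd (2 * t) then L ((c : ℕ) / 2) ((2 * t) / 2) else 0)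
            + (if Even (c : ℕ) ∧ Odd (2 * t + 1) then L ((c : ℕ) / 2) ((2 * t + 1) / 2) else 0))
          = if Even (c : ℕ) then L ((c : ℕ) / 2) t else 0 := by
        intro t
        have hno : ¬ Odd (2 * t) := Nat.not_odd_iff_even.mpr (even_two_mul t)
        have hyes : Odd (2 * t + 1) := odd_two_mul_add_one t
        have hdiv : (2 * t + 1) / 2 = t := by omega
        rw [if_neg (fun h => hno h.2), hdiv, zero_add]
        by_cases hc' : Even (c : ℕ)
        · rw [if_pos ⟨hc', hyes⟩, if_pos hc']
        · rw [if_neg (fun h => hc' h.1), if_neg hc']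
      simp_rw [h2]
      split_ifs with h'
      · rfl
      · simp
    have hcol : (∑ i : Fin n, lam (i, c))
        = if Odd (c : ℕ) then ∑ s ∈ Finset.range m, L s ((c : ℕ) / 2) else 0 := by
      have h1 : ∑ i : Fin n, lam (i, c)
          = ∑ im ∈ Finset.range n,
              (if Even im ∧ Odd (c : ℕ) then L (im / 2) ((c : ℕ) / 2) else 0) :=
        Fin.sum_univ_eq_sum_range
          (fun im => if Even im ∧ Odd (c : ℕ) then L (im / 2) ((c : ℕ) / 2) else 0) n
      rw [h1]
      have hrn : Finset.range n = Finset.range (2 * m) := by rw [hm]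
      rw [hrn, bc_sum_range_two_mul]
      have h2 : ∀ s, ((if Even (2 * s) ∧ Odd (c : ℕ) then L ((2 * s) / 2) ((c : ℕ) / 2) else 0)
            + (if Even (2 * s + 1) ∧ Odd (c : ℕ) then L ((2 * s + 1) / 2) ((c : ℕ) / 2) else 0))
          = if Odd (c : ℕ) then L s ((c : ℕ) / 2) else 0 := by
        intro s
        have hye : Even (2 * s) := even_two_mul s
        have hne : ¬ Even (2 * s + 1) := Nat.not_even_iff_odd.mpr (odd_two_mul_add_one s)
        have hdiv : (2 * s) / 2 = s := by omega
        by_cases hc' : Odd (c : ℕ)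
        · rw [if_pos (⟨hye, hc'⟩ : Even (2 * s) ∧ Odd (c : ℕ)),
            if_neg (fun h : Even (2 * s + 1) ∧ Odd (c : ℕ) => hne h.1), add_zero, hdiv,
            if_pos hc']
        · rw [if_neg (fun h : Even (2 * s) ∧ Odd (c : ℕ) => hc' h.2),
            if_neg (fun h : Even (2 * s + 1) ∧ Odd (c : ℕ) => hc' h.2), if_neg hc', add_zero]
      simp_rw [h2]
      split_ifs with h'
      · rfl
      · simp
    rcases Nat.even_or_odd (c : ℕ) with hc | hc
    · have hnotodd : ¬ Odd (c : ℕ) := by simp [Nat.odd_iff, Nat.even_iff] at hc ⊢; omega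
      rw [hrow, hcol, if_pos hc, if_neg hnotodd, add_zero]
      obtain ⟨r1, hr1⟩ := hc
      have hcs : (c : ℕ) / 2 = r1 := by omega
      have hsm : r1 + 1 ≤ m := by have := c.isLt; omega
      have hFs1 : F (r1 + 1) ≤ G m := by rw [← hFG]; exact hFmono hsm
      have hr := bc_row_sum m G hGmono hG0 (F r1) (F (r1 + 1))
        (hFmono (Nat.le_succ r1)) (hFnn r1) hFs1
      have hstep : F (r1 + 1) = F r1 + X (2 * r1) := by
        simp only [hF, Finset.sum_range_succ]
      rw [hcs]
      simp only [hL]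
      rw [hr, hxX c]
      have hcv : (c : ℕ) = 2 * r1 := by omega
      rw [hcv]
      linarith
    · have hnoteven : ¬ Even (c : ℕ) := by simp [Nat.odd_iff, Nat.even_iff] at hc ⊢; omega
      rw [hrow, hcol, if_neg hnoteven, if_pos hc, zero_add]
      obtain ⟨r2, hr2⟩ := hc
      have hct : (c : ℕ) / 2 = r2 := by omega
      have htm : r2 + 1 ≤ m := by have := c.isLt; omega
      rw [hct]
      have hcomm : ∀ s, L s r2
          = max 0 (min (G (r2 + 1)) (F (s + 1)) - max (G r2) (F s)) := by
        intro s
        simp only [hL]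
        rw [min_comm (F (s + 1)) (G (r2 + 1)), max_comm (F s) (G r2)]
      simp_rw [hcomm]
      have hGt1 : G (r2 + 1) ≤ F m := by rw [hFG]; exact hGmono htm
      have hr := bc_row_sum m F hFmono hF0 (G r2) (G (r2 + 1))
        (hGmono (Nat.le_succ r2)) (hGnn r2) hGt1
      rw [hr]
      have hstep : G (r2 + 1) = G r2 + X (2 * r2 + 1) := by
        simp only [hG, Finset.sum_range_succ]
      rw [hxX c]
      have hcv : (c : ℕ) = 2 * r2 + 1 := by omega
      rw [hcv]
      linarith

private lemma bc_reverse (n : ℕ) (x : Fin n → ℝ) (lam : Fin n × Fin n → ℝ)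
    (hnn : ∀ q, 0 ≤ lam q)
    (hsupp : ∀ q, lam q ≠ 0 → Even (q.1 : ℕ) ∧ Odd (q.2 : ℕ) ∧ q.1 < q.2)
    (hxeq : x = ∑ q : Fin n × Fin n, lam q • eVec n q.1 q.2) :
    (∀ i, 0 ≤ x i) ∧
    (∑ i : Fin n, (-1 : ℝ) ^ (i : ℕ) * x i = 0) ∧
    ∀ k : ℕ, k < n - 1 →
      0 ≤ ∑ i ∈ Finset.univ.filter (fun i : Fin n => (i : ℕ) ≤ k),
        (-1 : ℝ) ^ (i : ℕ) * x i := by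
  subst hxeq
  refine ⟨?_, ?_, ?_⟩
  · intro i
    rw [Finset.sum_apply]
    refine Finset.sum_nonneg fun q _ => ?_
    have : (0:ℝ) ≤ eVec n q.1 q.2 i := by
      unfold eVec; split_ifs <;> norm_num
    exact mul_nonneg (hnn q) this
  · have hswap : ∑ i : Fin n, (-1 : ℝ) ^ (i : ℕ) * (∑ q : Fin n × Fin n, lam q • eVec n q.1 q.2) i
        = ∑ q : Fin n × Fin n, lam q * ((-1:ℝ) ^ (q.1 : ℕ) + (-1:ℝ) ^ (q.2 : ℕ)) := by
      simp only [Finset.sum_apply, Pi.smul_apply, smul_eq_mul, Finset.mul_sum]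
      rw [Finset.sum_comm]
      refine Finset.sum_congr rfl fun q _ => ?_
      simp only [eVec, mul_add, mul_ite, mul_one, mul_zero, Finset.sum_add_distrib]
      rw [Finset.sum_ite_eq' Finset.univ q.1 (fun i => (-1:ℝ)^(i:ℕ) * lam q),
          Finset.sum_ite_eq' Finset.univ q.2 (fun i => (-1:ℝ)^(i:ℕ) * lam q)]
      simp [mul_add]
      ring
    rw [hswap]
    refine Finset.sum_eq_zero fun q _ => ?_
    by_cases h : lam q = 0
    · simp [h]
    · obtain ⟨he, ho, _⟩ := hsupp q h
      rw [he.neg_one_pow, ho.neg_one_pow]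
      ring
  · intro k hk
    have hswap : ∑ i ∈ Finset.univ.filter (fun i : Fin n => (i : ℕ) ≤ k),
          (-1 : ℝ) ^ (i : ℕ) * (∑ q : Fin n × Fin n, lam q • eVec n q.1 q.2) i
        = ∑ q : Fin n × Fin n, lam q *
            ((if (q.1 : ℕ) ≤ k then (-1:ℝ) ^ (q.1 : ℕ) else 0)
              + (if (q.2 : ℕ) ≤ k then (-1:ℝ) ^ (q.2 : ℕ) else 0)) := by
      simp only [Finset.sum_apply, Pi.smul_apply, smul_eq_mul, Finset.mul_sum]
      rw [Finset.sum_comm]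
      refine Finset.sum_congr rfl fun q _ => ?_
      simp only [eVec, mul_add, mul_ite, mul_one, mul_zero, Finset.sum_add_distrib]
      rw [Finset.sum_ite_eq' (Finset.univ.filter (fun i : Fin n => (i : ℕ) ≤ k)) q.1
            (fun i => (-1:ℝ)^(i:ℕ) * lam q),
          Finset.sum_ite_eq' (Finset.univ.filter (fun i : Fin n => (i : ℕ) ≤ k)) q.2
            (fun i => (-1:ℝ)^(i:ℕ) * lam q)]
      simp only [Finset.mem_filter, Finset.mem_univ, true_and]
      split_ifs <;> ring
    rw [hswap]
    refine Finset.sum_nonneg fun q _ => ?_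
    by_cases h : lam q = 0
    · simp [h]
    · obtain ⟨he, ho, hlt⟩ := hsupp q h
      rw [he.neg_one_pow, ho.neg_one_pow]
      have hq12 : (q.1 : ℕ) < (q.2 : ℕ) := hlt
      refine mul_nonneg (hnn q) ?_
      split_ifs <;> [linarith; linarith; omega; linarith]

/-- For even n, the cone of balanced vectors is exactly the set of nonnegative
linear combinations of the vectors e_{i,j} with i even, j odd, i < j. -/
theorem balancedCone_generators (n : ℕ) (hn : Even n) (x : Fin n → ℝ) :
    BalancedCone n x ↔
      ∃ lam : Fin n × Fin n → ℝ,
        (∀ q, 0 ≤ lam q) ∧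
        (∀ q, lam q ≠ 0 → Even (q.1 : ℕ) ∧ Odd (q.2 : ℕ) ∧ q.1 < q.2) ∧
        x = ∑ q : Fin n × Fin n, lam q • eVec n q.1 q.2 := by
  constructor
  · rintro ⟨h1, h2, h3⟩
    exact bc_forward n hn x h1 h2 h3
  · rintro ⟨lam, hnn, hsupp, hxeq⟩
    exact bc_reverse n x lam hnn hsupp hxeq
end
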